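/- For every real number τ > 1 there exists a constant C > 0, depending only on τ, such that for every integer k ≥ 2, every r > 0, every h ∈ (0,1) with h k ≥ 1, and every dimension N ≥ 3, one has ∑_{i=1}^{k} |x̄_1 − x̲_i|^{−τ} ≤ C ( (1/(r h)^τ) · (h k / √(1−h²)) + k^τ /(r √(1−h²))^τ ). -/
import Mathlib


/-- The upper points `x̄_j = r(√(1−h²)cos(2(j−1)π/k), √(1−h²)sin(2(j−1)π/k), h, 0, …, 0)`. -/
noncomputable def xbar (N k : ℕ) (r h : ℝ) (j : ℕ) : EuclideanSpace ℝ (Fin N) :=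
  (EuclideanSpace.equiv (Fin N) ℝ).symm fun i =>
    if (i : ℕ) = 0 then r * Real.sqrt (1 - h ^ 2) * Real.cos (2 * ((j : ℝ) - 1) * Real.pi / k)
    else if (i : ℕ) = 1 then r * Real.sqrt (1 - h ^ 2) * Real.sin (2 * ((j : ℝ) - 1) * Real.pi / k)
    else if (i : ℕ) = 2 then r * h
    else 0

/-- The lower points `x̲_j = r(√(1−h²)cos(2(j−1)π/k), √(1−h²)sin(2(j−1)π/k), −h, 0, …, 0)`. -/
noncomputable def xunder (N k : ℕ) (r h : ℝ) (j : ℕ) : EuclideanSpace ℝ (Fin N) :=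
  (EuclideanSpace.equiv (Fin N) ℝ).symm fun i =>
    if (i : ℕ) = 0 then r * Real.sqrt (1 - h ^ 2) * Real.cos (2 * ((j : ℝ) - 1) * Real.pi / k)
    else if (i : ℕ) = 1 then r * Real.sqrt (1 - h ^ 2) * Real.sin (2 * ((j : ℝ) - 1) * Real.pi / k)
    else if (i : ℕ) = 2 then -(r * h)
    else 0

lemma norm_sq_eq (N k : ℕ) (hN : 3 ≤ N) (r h : ℝ) (h1 : (0:ℝ) ≤ 1 - h ^ 2) (j : ℕ) :
    ‖xbar N k r h 1 - xunder N k r h j‖ ^ 2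
      = 4 * r ^ 2 * (1 - h ^ 2) * Real.sin (((j : ℝ) - 1) * Real.pi / k) ^ 2
        + 4 * r ^ 2 * h ^ 2 := by
  set θ : ℝ := 2 * ((j : ℝ) - 1) * Real.pi / k with hθ
  set s : ℝ := Real.sqrt (1 - h ^ 2) with hsdef
  have hs2 : s ^ 2 = 1 - h ^ 2 := Real.sq_sqrt h1
  have key : ∀ i : Fin N, ‖(xbar N k r h 1 - xunder N k r h j) i‖ ^ 2 =
      (fun m : ℕ =>
        if m = 0 then (r * s * (1 - Real.cos θ)) ^ 2
        else if m = 1 then (r * s * Real.sin θ) ^ 2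
        else if m = 2 then (2 * r * h) ^ 2
        else 0) (i : ℕ) := by
    intro i
    have e0 : 2 * (((1:ℕ) : ℝ) - 1) * Real.pi / k = 0 := by push_cast; ring
    have hx : (xbar N k r h 1 - xunder N k r h j) i =
        (if (i : ℕ) = 0 then r * s * Real.cos (2 * (((1:ℕ):ℝ) - 1) * Real.pi / k)
          else if (i : ℕ) = 1 then r * s * Real.sin (2 * (((1:ℕ):ℝ) - 1) * Real.pi / k)
          else if (i : ℕ) = 2 then r * h else 0)
        - (if (i : ℕ) = 0 then r * s * Real.cos θ
          else if (i : ℕ) = 1 then r * s * Real.sin θ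
          else if (i : ℕ) = 2 then -(r * h) else 0) := rfl
    rw [hx, e0, Real.cos_zero, Real.sin_zero, Real.norm_eq_abs, sq_abs]
    rcases Nat.lt_or_ge (i : ℕ) 3 with hi | hi
    · interval_cases h : (i : ℕ) <;> simp <;> ring
    · have h0 : (i : ℕ) ≠ 0 := by omega
      have h1' : (i : ℕ) ≠ 1 := by omega
      have h2 : (i : ℕ) ≠ 2 := by omega
      simp [h0, h1', h2]
  have hsin : Real.sin (((j : ℝ) - 1) * Real.pi / k) ^ 2 = (1 - Real.cos θ) / 2 := by
    have e : ((j : ℝ) - 1) * Real.pi / k = θ / 2 := by rw [hθ]; ring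
    rw [e, ← sq_abs, Real.abs_sin_half, Real.sq_sqrt]
    have := Real.cos_le_one θ; linarith
  rw [EuclideanSpace.norm_eq, Real.sq_sqrt (by positivity)]
  calc (∑ i : Fin N, ‖(xbar N k r h 1 - xunder N k r h j) i‖ ^ 2)
      = ∑ m ∈ Finset.range N, (fun m : ℕ =>
        if m = 0 then (r * s * (1 - Real.cos θ)) ^ 2
        else if m = 1 then (r * s * Real.sin θ) ^ 2
        else if m = 2 then (2 * r * h) ^ 2
        else 0) m := by
        rw [← Fin.sum_univ_eq_sum_range]
        exact Finset.sum_congr rfl fun i _ => key i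
    _ = (r * s * (1 - Real.cos θ)) ^ 2 + (r * s * Real.sin θ) ^ 2 + (2 * r * h) ^ 2 := by
        rw [Finset.range_eq_Ico, ← Finset.sum_Ico_consecutive _ (by omega : 0 ≤ 3) hN]
        have hz : ∑ i ∈ Finset.Ico 3 N, (fun m : ℕ =>
            if m = 0 then (r * s * (1 - Real.cos θ)) ^ 2
            else if m = 1 then (r * s * Real.sin θ) ^ 2
            else if m = 2 then (2 * r * h) ^ 2
            else 0) i = 0 := by
          refine Finset.sum_eq_zero fun m hm => ?_
          simp only [Finset.mem_Ico] at hm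
          have h0 : m ≠ 0 := by omega
          have h1' : m ≠ 1 := by omega
          have h2 : m ≠ 2 := by omega
          simp [h0, h1', h2]
        rw [hz, add_zero, ← Finset.range_eq_Ico]
        simp [Finset.sum_range_succ]
    _ = 4 * r ^ 2 * (1 - h ^ 2) * Real.sin (((j : ℝ) - 1) * Real.pi / k) ^ 2
        + 4 * r ^ 2 * h ^ 2 := by
        have expand : (r * s * (1 - Real.cos θ)) ^ 2 + (r * s * Real.sin θ) ^ 2
            + (2 * r * h) ^ 2 = r ^ 2 * s ^ 2 * (2 - 2 * Real.cos θ) + 4 * r ^ 2 * h ^ 2 := by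
          linear_combination (r ^ 2 * s ^ 2) * Real.sin_sq_add_cos_sq θ
        rw [expand, hs2, hsin]; ring

lemma norm_ge_h (N k : ℕ) (hN : 3 ≤ N) (r h : ℝ) (hr : 0 < r) (hh0 : 0 < h)
    (h1 : (0:ℝ) ≤ 1 - h ^ 2) (j : ℕ) :
    2 * r * h ≤ ‖xbar N k r h 1 - xunder N k r h j‖ := by
  have e := norm_sq_eq N k hN r h h1 j
  calc 2 * r * h = Real.sqrt ((2 * r * h) ^ 2) := (Real.sqrt_sq (by positivity)).symm
    _ ≤ Real.sqrt (‖xbar N k r h 1 - xunder N k r h j‖ ^ 2) := by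
        apply Real.sqrt_le_sqrt
        nlinarith [sq_nonneg (Real.sin (((j : ℝ) - 1) * Real.pi / k)),
          mul_nonneg (mul_nonneg (by norm_num : (0:ℝ) ≤ 4) (sq_nonneg r)) h1,
          sq_nonneg (Real.sin (((j : ℝ) - 1) * Real.pi / k) * r)]
    _ = ‖xbar N k r h 1 - xunder N k r h j‖ := Real.sqrt_sq (norm_nonneg _)

lemma norm_ge_sin (N k : ℕ) (hN : 3 ≤ N) (r h : ℝ) (hr : 0 < r)
    (h1 : (0:ℝ) ≤ 1 - h ^ 2) (j : ℕ)
    (hsin : 0 ≤ Real.sin (((j : ℝ) - 1) * Real.pi / k)) :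
    2 * r * Real.sqrt (1 - h ^ 2) * Real.sin (((j : ℝ) - 1) * Real.pi / k)
      ≤ ‖xbar N k r h 1 - xunder N k r h j‖ := by
  have e := norm_sq_eq N k hN r h h1 j
  have hs2 : Real.sqrt (1 - h ^ 2) ^ 2 = 1 - h ^ 2 := Real.sq_sqrt h1
  have ha : 0 ≤ 2 * r * Real.sqrt (1 - h ^ 2) * Real.sin (((j : ℝ) - 1) * Real.pi / k) :=
    mul_nonneg (mul_nonneg (by linarith) (Real.sqrt_nonneg _)) hsin
  calc 2 * r * Real.sqrt (1 - h ^ 2) * Real.sin (((j : ℝ) - 1) * Real.pi / k)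
      = Real.sqrt ((2 * r * Real.sqrt (1 - h ^ 2) * Real.sin (((j : ℝ) - 1) * Real.pi / k)) ^ 2) :=
        (Real.sqrt_sq ha).symm
    _ ≤ Real.sqrt (‖xbar N k r h 1 - xunder N k r h j‖ ^ 2) := by
        apply Real.sqrt_le_sqrt
        rw [e]
        have h4 : (2 * r * Real.sqrt (1 - h ^ 2) * Real.sin (((j : ℝ) - 1) * Real.pi / k)) ^ 2
            = 4 * r ^ 2 * (1 - h ^ 2) * Real.sin (((j : ℝ) - 1) * Real.pi / k) ^ 2 := by
          linear_combination (4 * r ^ 2 * Real.sin (((j : ℝ) - 1) * Real.pi / k) ^ 2) * hs2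
        rw [h4]
        nlinarith [sq_nonneg (r * h)]
    _ = ‖xbar N k r h 1 - xunder N k r h j‖ := Real.sqrt_sq (norm_nonneg _)

lemma sin_lower (k m : ℕ) (hk : 0 < k) (hm : m < k) :
    2 * ((min m (k - m) : ℕ) : ℝ) / k ≤ Real.sin ((m : ℝ) * Real.pi / k) := by
  have hkR : (0:ℝ) < k := by exact_mod_cast hk
  rcases le_or_gt (2 * m) k with hc | hc
  · have hmin : min m (k - m) = m := by omega
    rw [hmin]
    have h0 : (0:ℝ) ≤ (m : ℝ) * Real.pi / k := by positivity
    have h2 : (m : ℝ) * Real.pi / k ≤ Real.pi / 2 := by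
      rw [div_le_div_iff₀ hkR (by norm_num)]
      have : (2:ℝ) * m ≤ k := by exact_mod_cast hc
      nlinarith [Real.pi_pos]
    have := Real.mul_le_sin h0 h2
    calc 2 * (m:ℝ) / k = 2 / Real.pi * ((m:ℝ) * Real.pi / k) := by
          field_simp
      _ ≤ Real.sin ((m : ℝ) * Real.pi / k) := this
  · have hmin : min m (k - m) = k - m := by omega
    rw [hmin]
    have hcast : ((k - m : ℕ) : ℝ) = (k : ℝ) - m := by
      push_cast [Nat.cast_sub (le_of_lt hm)]; ring
    have heq : Real.sin ((m : ℝ) * Real.pi / k)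
        = Real.sin (((k - m : ℕ) : ℝ) * Real.pi / k) := by
      rw [hcast, ← Real.sin_pi_sub]
      congr 1
      field_simp
    rw [heq, hcast]
    have h0 : (0:ℝ) ≤ ((k:ℝ) - m) * Real.pi / k := by
      have hmk : (m:ℝ) ≤ k := by exact_mod_cast (le_of_lt hm)
      exact div_nonneg (mul_nonneg (by linarith) Real.pi_pos.le) hkR.le
    have h2 : ((k:ℝ) - m) * Real.pi / k ≤ Real.pi / 2 := by
      rw [div_le_div_iff₀ hkR (by norm_num)]
      have : (k:ℝ) < 2 * m := by exact_mod_cast hc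
      nlinarith [Real.pi_pos]
    have := Real.mul_le_sin h0 h2
    calc 2 * ((k:ℝ) - m) / k = 2 / Real.pi * (((k:ℝ) - m) * Real.pi / k) := by
          field_simp
      _ ≤ Real.sin (((k:ℝ) - m) * Real.pi / k) := this


set_option maxHeartbeats 1600000 in
/-- For every `τ > 1` there is `C > 0` (depending only on `τ`) such that
for all `k ≥ 2`, `r > 0`, `h ∈ (0,1)` with `h k ≥ 1`, and `N ≥ 3`:
`∑_{i=1}^k |x̄_1 − x̲_i|^{−τ} ≤ C ((1/(rh)^τ)·(hk/√(1−h²)) + k^τ/(r√(1−h²))^τ)`. -/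
theorem stmt_5 (τ : ℝ) (hτ : 1 < τ) :
    ∃ C > 0, ∀ (k : ℕ), 2 ≤ k → ∀ (r h : ℝ), 0 < r → h ∈ Set.Ioo (0 : ℝ) 1 →
      1 ≤ h * k → ∀ (N : ℕ), 3 ≤ N →
        ∑ i ∈ Finset.Icc 1 k, ‖xbar N k r h 1 - xunder N k r h i‖ ^ (-τ) ≤
          C * (1 / (r * h) ^ τ * (h * k / Real.sqrt (1 - h ^ 2)) +
            (k : ℝ) ^ τ / (r * Real.sqrt (1 - h ^ 2)) ^ τ) := by
  have hτ0 : -τ ≤ 0 := by linarith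
  set T : ℝ := ∑' n : ℕ, (n : ℝ) ^ (-τ) with hTdef
  have hsum : Summable (fun n : ℕ => (n : ℝ) ^ (-τ)) :=
    Real.summable_nat_rpow.mpr (by linarith)
  have hT0 : 0 ≤ T := tsum_nonneg fun n => Real.rpow_nonneg (Nat.cast_nonneg n) _
  refine ⟨2 + 2 * T, by linarith, ?_⟩
  intro k hk r h hr hh hhk N hN
  obtain ⟨hh0, hh1⟩ := hh
  have hk0 : 0 < k := by omega
  have hkR : (0:ℝ) < k := by exact_mod_cast hk0
  have h1 : (0:ℝ) ≤ 1 - h ^ 2 := by nlinarith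
  have h1' : (0:ℝ) < 1 - h ^ 2 := by nlinarith
  set s : ℝ := Real.sqrt (1 - h ^ 2) with hsdef
  have hs0 : 0 < s := Real.sqrt_pos.mpr h1'
  have hs1 : s ≤ 1 := by
    calc s ≤ Real.sqrt 1 := Real.sqrt_le_sqrt (by nlinarith)
      _ = 1 := Real.sqrt_one
  set f : ℕ → ℝ := fun i => ‖xbar N k r h 1 - xunder N k r h i‖ ^ (-τ) with hfdef
  set A : ℝ := h * k / (2 * s) with hAdef
  have hA0 : 0 ≤ A := by positivity
  have hA : 1 / 2 ≤ A := by
    rw [hAdef, le_div_iff₀ (by positivity)]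
    have : s ≤ h * k := le_trans hs1 hhk
    linarith
  set B : ℕ := ⌊A⌋₊ with hBdef
  have hBA : (B : ℝ) ≤ A := Nat.floor_le hA0
  -- reindex
  have hre : ∑ i ∈ Finset.Icc 1 k, f i = ∑ m ∈ Finset.range k, f (1 + m) := by
    rw [← Finset.Ico_add_one_right_eq_Icc, Finset.sum_Ico_eq_sum_range]
    simp
  -- term bounds
  have tb1 : ∀ m : ℕ, f (1 + m) ≤ (2 * r * h) ^ (-τ) := by
    intro m
    exact Real.rpow_le_rpow_of_nonpos (by positivity)
      (norm_ge_h N k hN r h hr hh0 h1 (1 + m)) hτ0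
  have tb2 : ∀ m : ℕ, 1 ≤ m → m < k →
      f (1 + m) ≤ (4 * r * s / k) ^ (-τ) * ((min m (k - m) : ℕ) : ℝ) ^ (-τ) := by
    intro m hm1 hmk
    have hμ1 : 1 ≤ min m (k - m) := by omega
    have hμR : (1:ℝ) ≤ ((min m (k - m) : ℕ) : ℝ) := by exact_mod_cast hμ1
    have hsl := sin_lower k m hk0 hmk
    have hsin0 : 0 ≤ Real.sin ((m : ℝ) * Real.pi / k) :=
      le_trans (by positivity) hsl
    have hcast : (((1 + m : ℕ) : ℝ) - 1) = (m : ℝ) := by push_cast; ring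
    have hb := norm_ge_sin N k hN r h hr h1 (1 + m) (by rw [hcast]; exact hsin0)
    rw [hcast] at hb
    have hchain : 4 * r * s / k * ((min m (k - m) : ℕ) : ℝ)
        ≤ ‖xbar N k r h 1 - xunder N k r h (1 + m)‖ := by
      have step : 4 * r * s / k * ((min m (k - m) : ℕ) : ℝ)
          = 2 * r * s * (2 * ((min m (k - m) : ℕ) : ℝ) / k) := by ring
      rw [step]
      calc 2 * r * s * (2 * ((min m (k - m) : ℕ) : ℝ) / k)
          ≤ 2 * r * s * Real.sin ((m : ℝ) * Real.pi / k) := by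
            apply mul_le_mul_of_nonneg_left hsl (by positivity)
        _ ≤ _ := hb
    calc f (1 + m) ≤ (4 * r * s / k * ((min m (k - m) : ℕ) : ℝ)) ^ (-τ) :=
          Real.rpow_le_rpow_of_nonpos (by positivity) hchain hτ0
      _ = (4 * r * s / k) ^ (-τ) * ((min m (k - m) : ℕ) : ℝ) ^ (-τ) :=
          Real.mul_rpow (by positivity) (by positivity)
  -- part 1
  have card_bound : ((Finset.range k).filter (fun m => min m (k - m) ≤ B)).card ≤ 2 * B + 1 := by
    have hsub : (Finset.range k).filter (fun m => min m (k - m) ≤ B) ⊆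
        Finset.range (B + 1) ∪ Finset.Ico (k - B) k := by
      intro m hm
      simp only [Finset.mem_filter, Finset.mem_range] at hm
      simp only [Finset.mem_union, Finset.mem_range, Finset.mem_Ico]
      omega
    calc ((Finset.range k).filter (fun m => min m (k - m) ≤ B)).card
        ≤ (Finset.range (B + 1) ∪ Finset.Ico (k - B) k).card := Finset.card_le_card hsub
      _ ≤ (Finset.range (B + 1)).card + (Finset.Ico (k - B) k).card := Finset.card_union_le _ _
      _ ≤ 2 * B + 1 := by rw [Finset.card_range, Nat.card_Ico]; omega
  have part1 : ∑ m ∈ (Finset.range k).filter (fun m => min m (k - m) ≤ B), f (1 + m)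
      ≤ 2 * (1 / (r * h) ^ τ * (h * k / s)) := by
    have step1 : ∑ m ∈ (Finset.range k).filter (fun m => min m (k - m) ≤ B), f (1 + m)
        ≤ (((Finset.range k).filter (fun m => min m (k - m) ≤ B)).card : ℝ) * (2 * r * h) ^ (-τ) := by
      have := Finset.sum_le_card_nsmul ((Finset.range k).filter (fun m => min m (k - m) ≤ B)) (fun m => f (1 + m))
        ((2 * r * h) ^ (-τ)) (fun m _ => tb1 m)
      simpa [nsmul_eq_mul] using this
    have hcard : (((Finset.range k).filter (fun m => min m (k - m) ≤ B)).card : ℝ) ≤ 4 * A := by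
      have : (((Finset.range k).filter (fun m => min m (k - m) ≤ B)).card : ℝ) ≤ 2 * B + 1 := by exact_mod_cast card_bound
      linarith
    have hrh : (2 * r * h) ^ (-τ) ≤ (r * h) ^ (-τ) :=
      Real.rpow_le_rpow_of_nonpos (by positivity) (by nlinarith) hτ0
    calc ∑ m ∈ (Finset.range k).filter (fun m => min m (k - m) ≤ B), f (1 + m)
        ≤ (((Finset.range k).filter (fun m => min m (k - m) ≤ B)).card : ℝ) * (2 * r * h) ^ (-τ) := step1
      _ ≤ (4 * A) * (r * h) ^ (-τ) := by
          apply mul_le_mul hcard hrh (by positivity) (by positivity)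
      _ = 2 * (1 / (r * h) ^ τ * (h * k / s)) := by
          rw [Real.rpow_neg (by positivity)]
          rw [hAdef]
          field_simp
          ring
  -- part 2
  have part2 : ∑ m ∈ (Finset.range k).filter (fun m => ¬ min m (k - m) ≤ B), f (1 + m)
      ≤ 2 * T * ((k : ℝ) ^ τ / (r * s) ^ τ) := by
    have g_nonneg : ∀ m : ℕ, 0 ≤ (4 * r * s / k) ^ (-τ) *
        (((m : ℕ) : ℝ) ^ (-τ) + (((k - m : ℕ) : ℕ) : ℝ) ^ (-τ)) := by
      intro m
      apply mul_nonneg (Real.rpow_nonneg (by positivity) _)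
      exact add_nonneg (Real.rpow_nonneg (Nat.cast_nonneg _) _)
        (Real.rpow_nonneg (Nat.cast_nonneg _) _)
    have step1 : ∑ m ∈ (Finset.range k).filter (fun m => ¬ min m (k - m) ≤ B), f (1 + m)
        ≤ ∑ m ∈ (Finset.range k).filter (fun m => ¬ min m (k - m) ≤ B),
          (4 * r * s / k) ^ (-τ) * (((m : ℕ) : ℝ) ^ (-τ) + (((k - m : ℕ) : ℕ) : ℝ) ^ (-τ)) := by
      apply Finset.sum_le_sum
      intro m hm
      simp only [Finset.mem_filter, Finset.mem_range] at hm
      have hm1 : 1 ≤ m := by omega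
      have hmk : m < k := hm.1
      refine le_trans (tb2 m hm1 hmk) ?_
      apply mul_le_mul_of_nonneg_left ?_ (Real.rpow_nonneg (by positivity) _)
      rcases le_total m (k - m) with hle | hle
      · rw [min_eq_left hle]
        have : (0:ℝ) ≤ (((k - m : ℕ) : ℕ) : ℝ) ^ (-τ) := Real.rpow_nonneg (Nat.cast_nonneg _) _
        linarith
      · rw [min_eq_right hle]
        have : (0:ℝ) ≤ ((m : ℕ) : ℝ) ^ (-τ) := Real.rpow_nonneg (Nat.cast_nonneg _) _
        linarith
    have step2 : ∑ m ∈ (Finset.range k).filter (fun m => ¬ min m (k - m) ≤ B),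
          (4 * r * s / k) ^ (-τ) * (((m : ℕ) : ℝ) ^ (-τ) + (((k - m : ℕ) : ℕ) : ℝ) ^ (-τ))
        ≤ ∑ m ∈ Finset.Ico 1 k,
          (4 * r * s / k) ^ (-τ) * (((m : ℕ) : ℝ) ^ (-τ) + (((k - m : ℕ) : ℕ) : ℝ) ^ (-τ)) := by
      apply Finset.sum_le_sum_of_subset_of_nonneg
      · intro m hm
        simp only [Finset.mem_filter, Finset.mem_range] at hm
        simp only [Finset.mem_Ico]
        omega
      · intro m _ _; exact g_nonneg m
    have reflect : ∑ m ∈ Finset.Ico 1 k, (((k - m : ℕ) : ℕ) : ℝ) ^ (-τ)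
        = ∑ m ∈ Finset.Ico 1 k, ((m : ℕ) : ℝ) ^ (-τ) := by
      have := Finset.sum_Ico_reflect (fun n : ℕ => ((n : ℕ) : ℝ) ^ (-τ)) 1
        (by omega : k ≤ k + 1)
      simpa using this
    have tail : ∑ m ∈ Finset.Ico 1 k, ((m : ℕ) : ℝ) ^ (-τ) ≤ T :=
      Summable.sum_le_tsum (Finset.Ico 1 k) (fun i _ => Real.rpow_nonneg (Nat.cast_nonneg _) _) hsum
    have step3 : ∑ m ∈ Finset.Ico 1 k,
          (4 * r * s / k) ^ (-τ) * (((m : ℕ) : ℝ) ^ (-τ) + (((k - m : ℕ) : ℕ) : ℝ) ^ (-τ))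
        ≤ (4 * r * s / k) ^ (-τ) * (2 * T) := by
      rw [← Finset.mul_sum, Finset.sum_add_distrib, reflect]
      apply mul_le_mul_of_nonneg_left ?_ (Real.rpow_nonneg (by positivity) _)
      linarith
    have step4 : (4 * r * s / k) ^ (-τ) ≤ (k : ℝ) ^ τ / (r * s) ^ τ := by
      have h1s : (4 * r * s / k) ^ (-τ) ≤ (r * s / k) ^ (-τ) :=
        Real.rpow_le_rpow_of_nonpos (by positivity)
          (by rw [div_le_div_iff₀ (by positivity) (by positivity)]; nlinarith [mul_pos (mul_pos hr hs0) hkR]) hτ0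
      have h2s : (r * s / k : ℝ) ^ (-τ) = (k : ℝ) ^ τ / (r * s) ^ τ := by
        rw [Real.rpow_neg (by positivity), Real.div_rpow (by positivity) (by positivity),
          inv_div]
      linarith
    calc ∑ m ∈ (Finset.range k).filter (fun m => ¬ min m (k - m) ≤ B), f (1 + m)
        ≤ (4 * r * s / k) ^ (-τ) * (2 * T) := le_trans step1 (le_trans step2 step3)
      _ ≤ ((k : ℝ) ^ τ / (r * s) ^ τ) * (2 * T) := by
          apply mul_le_mul_of_nonneg_right step4 (by linarith)
      _ = 2 * T * ((k : ℝ) ^ τ / (r * s) ^ τ) := by ring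
  have ht1 : 0 ≤ 1 / (r * h) ^ τ * (h * k / s) := by positivity
  have ht2 : 0 ≤ (k : ℝ) ^ τ / (r * s) ^ τ := by positivity
  have split := Finset.sum_filter_add_sum_filter_not (Finset.range k)
    (fun m => min m (k - m) ≤ B) (fun m => f (1 + m))
  have final : 2 * (1 / (r * h) ^ τ * (h * ↑k / s)) + 2 * T * ((k : ℝ) ^ τ / (r * s) ^ τ)
      ≤ (2 + 2 * T) * (1 / (r * h) ^ τ * (h * ↑k / s) + (k : ℝ) ^ τ / (r * s) ^ τ) := by
    have e : (2 + 2 * T) * (1 / (r * h) ^ τ * (h * ↑k / s) + (k : ℝ) ^ τ / (r * s) ^ τ)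
        = 2 * (1 / (r * h) ^ τ * (h * ↑k / s)) + 2 * T * ((k : ℝ) ^ τ / (r * s) ^ τ)
          + (2 * (T * (1 / (r * h) ^ τ * (h * ↑k / s))) + 2 * ((k : ℝ) ^ τ / (r * s) ^ τ)) := by
      ring
    have p1 : 0 ≤ T * (1 / (r * h) ^ τ * (h * ↑k / s)) := mul_nonneg hT0 ht1
    rw [e]
    have q1 : 0 ≤ 2 * (T * (1 / (r * h) ^ τ * (h * ↑k / s))) := by linarith
    have q2 : 0 ≤ 2 * ((k : ℝ) ^ τ / (r * s) ^ τ) := by linarith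
    exact le_add_of_nonneg_right (add_nonneg q1 q2)
  calc ∑ i ∈ Finset.Icc 1 k, f i
      = ∑ m ∈ (Finset.range k).filter (fun m => min m (k - m) ≤ B), f (1 + m)
        + ∑ m ∈ (Finset.range k).filter (fun m => ¬ min m (k - m) ≤ B), f (1 + m) := by
        rw [hre, split]
    _ ≤ 2 * (1 / (r * h) ^ τ * (h * ↑k / s)) + 2 * T * ((k : ℝ) ^ τ / (r * s) ^ τ) :=
        add_le_add part1 part2
    _ ≤ (2 + 2 * T) * (1 / (r * h) ^ τ * (h * ↑k / s) + (k : ℝ) ^ τ / (r * s) ^ τ) := final
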